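/- With the setup of orbit points xᵢ = ξ^{i−1}(O) for i > 0 and ξ^{i}(O) for i < 0 along an axis τ of a hyperbolic isometry ξ with minimal displacement L ≥ 300δ and |O ξ(O)| ≤ L + ε (ε < δ), let pᵢ be projections of xᵢ to τ. Then |xᵢ pᵢ| ≤ 28δ, and for adjacent indices i, j one has |L − |pᵢ pⱼ|| ≤ 56δ + ε; consequently the points pᵢ lie on τ in the order induced by ℤ* = ℤ∖{0}. -/

import Mathlib

open Metric Set

variable {X : Type*} [MetricSpace X]

/-- Four-point condition for δ-hyperbolicity. -/
def FourPointHyp (X : Type*) [MetricSpace X] (δ : ℝ) : Prop :=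
  ∀ x y z w : X,
    dist x y + dist z w ≤ max (dist x z + dist y w) (dist y z + dist x w) + 2 * δ

/-- `s` is a geodesic segment from `a` to `b`. -/
def IsGeodSegment {X : Type*} [MetricSpace X] (a b : X) (s : Set X) : Prop :=
  ∃ f : ℝ → X, f 0 = a ∧ f (dist a b) = b ∧
    (∀ u ∈ Icc (0:ℝ) (dist a b), ∀ v ∈ Icc (0:ℝ) (dist a b),
      dist (f u) (f v) = |u - v|) ∧
    s = f '' Icc (0:ℝ) (dist a b)

/-- `X` is a geodesic space. -/
def IsGeodesicSpace (X : Type*) [MetricSpace X] : Prop :=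
  ∀ a b : X, ∃ s : Set X, IsGeodSegment a b s

/-- `τ : ℝ → X` is a geodesic line. -/
def IsGeodLine (τ : ℝ → X) : Prop := ∀ u v : ℝ, dist (τ u) (τ v) = |u - v|

/-- An isometry is hyperbolic if the orbit map `n ↦ ξⁿ(x)` is a quasi-isometric
embedding of `ℤ` into `X`. -/
def IsHypIsom (ξ : X ≃ᵢ X) : Prop :=
  ∃ x : X, ∃ A : ℝ, 0 < A ∧ ∃ B : ℝ, ∀ m n : ℤ,
    A * |(m : ℝ) - (n : ℝ)| - B ≤ dist ((ξ ^ m) x) ((ξ ^ n) x)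

/-- An axis of `ξ`: a geodesic line joining the two fixed points of `ξ` at infinity,
equivalently a geodesic line whose image is at finite Hausdorff distance from its
`ξ`-image. -/
def IsAxis (ξ : X ≃ᵢ X) (τ : ℝ → X) : Prop :=
  IsGeodLine τ ∧ ∃ C : ℝ,
    (∀ t : ℝ, infDist (ξ (τ t)) (range τ) ≤ C) ∧
    (∀ t : ℝ, infDist (τ t) (range fun s => ξ (τ s)) ≤ C)

/-- The orbit points `x₁ = O`, `xᵢ = ξ^{i-1}(O)` for `i > 0`, `xᵢ = ξ^{i}(O)` for
`i < 0`. -/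
noncomputable def orbitPt (ξ : X ≃ᵢ X) (O : X) (i : ℤ) : X :=
  if 0 < i then (ξ ^ (i - 1)) O else (ξ ^ i) O

/-- The Voronoi cell `Dᵢ` of the orbit point `xᵢ`. -/
noncomputable def vorCell (ξ : X ≃ᵢ X) (O : X) (i : ℤ) : Set X :=
  {y : X | ∀ j : ℤ, j ≠ 0 → dist y (orbitPt ξ O i) ≤ dist y (orbitPt ξ O j)}

/-- Indices `i, j ∈ ℤ* = ℤ∖{0}` are adjacent (consecutive in `ℤ*`, where `-1` and
`1` are adjacent). -/
def AdjIdx (i j : ℤ) : Prop :=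
  i ≠ 0 ∧ j ≠ 0 ∧ (j = i + 1 ∨ (i = -1 ∧ j = 1))

/-! In the Gromov-product form of the four-point condition triangles are `4δ`-thin, so a
geodesic line at bounded distance from its `ξ`-image is `8δ`-close to it. For `y = xᵢ`, the
nearest points `pᵢ` of `y` and `pⱼ` of `ξ y` on `τ` then satisfy `|y pᵢ| ≈ |ξy pⱼ|` and
`pⱼ ≈ ξ pᵢ`, hence `|pᵢ pⱼ| ≥ L - 31δ`. Since nearest-point projection to a line is strongly
contracting, `|y ξy| ≥ |y pᵢ| + |pᵢ pⱼ| + |ξy pⱼ| - 12δ`, and `|y ξy| ≤ L + ε` bounds `|y pᵢ|`.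
The points `pᵢ` are ordered along `τ` because consecutive steps have length at most `L + 57δ`
while double steps have length at least `2L - 60δ` (as `|y ξ²y| ≥ |y ξy| + L - 4δ`), so two
consecutive steps never point in opposite directions. -/

noncomputable def gromovProduct (w x y : X) : ℝ := (dist w x + dist w y - dist x y) / 2

namespace FourPointHyp

variable {δ : ℝ}

lemma le_or_le (hyp : FourPointHyp X δ) (x y z w : X) :
    dist x y + dist z w ≤ dist x z + dist y w + 2 * δ ∨
      dist x y + dist z w ≤ dist y z + dist x w + 2 * δ := by
  rcases le_total (dist x z + dist y w) (dist y z + dist x w) with h | h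
  · exact Or.inr ((max_eq_right h) ▸ hyp x y z w)
  · exact Or.inl ((max_eq_left h) ▸ hyp x y z w)

lemma nonneg (hyp : FourPointHyp X δ) (x : X) : 0 ≤ δ := by
  have := hyp x x x x
  simp only [dist_self, add_zero, max_self, zero_add] at this
  linarith

lemma min_gromovProduct_le (hyp : FourPointHyp X δ) (w x y z : X) :
    min (gromovProduct w x y) (gromovProduct w y z) - δ ≤ gromovProduct w x z := by
  have := min_le_left (gromovProduct w x y) (gromovProduct w y z)
  have := min_le_right (gromovProduct w x y) (gromovProduct w y z)
  unfold gromovProduct at *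
  rcases hyp.le_or_le x z y w with h | h <;>
    linarith [dist_comm w x, dist_comm w y, dist_comm w z, dist_comm z y]

lemma min_min_gromovProduct_le (hyp : FourPointHyp X δ) (w x y z v : X) :
    min (gromovProduct w x y) (min (gromovProduct w y z) (gromovProduct w z v)) - 2 * δ
      ≤ gromovProduct w x v := by
  have hδ := hyp.nonneg w
  have hxz := hyp.min_gromovProduct_le w x y z
  have hxv := hyp.min_gromovProduct_le w x z v
  simp only [min_def] at hxz hxv ⊢
  split_ifs at hxz hxv ⊢ <;> linarith

lemma dist_le_of_le_gromovProduct (hyp : FourPointHyp X δ) {a b c p m : X}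
    (hp : dist a p + dist p b = dist a b) (hm : dist a m + dist m c = dist a c)
    (hpm : dist a p = dist a m) (hpbc : dist a p ≤ gromovProduct a b c) :
    dist p m ≤ 4 * δ := by
  -- `(p|m)_a ≥ min ((p|b)_a, (b|c)_a, (c|m)_a) - 2δ = r - 2δ`, where `r = |ap| = |am|`.
  have hchain := hyp.min_min_gromovProduct_le a p b c m
  have hpb : gromovProduct a p b = dist a p := by unfold gromovProduct; linarith
  have hcm : gromovProduct a c m = dist a p := by
    unfold gromovProduct; linarith [dist_comm c m]
  rw [hpb, hcm, min_eq_right hpbc, min_self] at hchain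
  unfold gromovProduct at hchain
  linarith

end FourPointHyp

/-- `S` contains the points of a geodesic from `a` to `b`; no continuity is required. -/
def ContainsSegment (S : Set X) (a b : X) : Prop :=
  ∀ u ∈ Icc 0 (dist a b), ∃ m ∈ S, dist a m = u ∧ dist m b = dist a b - u

namespace ContainsSegment

variable {S : Set X} {a b : X}

lemma symm (h : ContainsSegment S a b) : ContainsSegment S b a := by
  intro u hu
  rw [dist_comm] at hu
  obtain ⟨m, hmS, ham, hmb⟩ := h (dist a b - u) ⟨by linarith [hu.2], by linarith [hu.1]⟩
  exact ⟨m, hmS, by rw [dist_comm, hmb, dist_comm]; ring, by rw [dist_comm, ham, dist_comm]⟩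

lemma right_mem (h : ContainsSegment S a b) : b ∈ S := by
  obtain ⟨m, hmS, -, hmb⟩ := h (dist a b) ⟨dist_nonneg, le_rfl⟩
  rw [sub_self, dist_eq_zero] at hmb
  exact hmb ▸ hmS

end ContainsSegment

lemma IsGeodesicSpace.containsSegment_univ (hgeo : IsGeodesicSpace X) (a b : X) :
    ContainsSegment univ a b := by
  obtain ⟨-, f, hf0, hfd, hf, -⟩ := hgeo a b
  intro u hu
  refine ⟨f u, mem_univ _, ?_, ?_⟩
  · rw [← hf0, hf 0 ⟨le_rfl, dist_nonneg⟩ u hu, zero_sub, abs_neg, abs_of_nonneg hu.1]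
  · rw [← hfd, hf u hu _ ⟨dist_nonneg, le_rfl⟩, hfd, abs_sub_comm,
      abs_of_nonneg (sub_nonneg.2 hu.2)]

lemma IsGeodLine.containsSegment {τ : ℝ → X} (hτ : IsGeodLine τ) (s s' : ℝ) :
    ContainsSegment (range τ) (τ s) (τ s') := by
  wlog h : s ≤ s' generalizing s s'
  · exact (this s' s (le_of_not_ge h)).symm
  intro u hu
  rw [hτ, abs_sub_comm, abs_of_nonneg (sub_nonneg.2 h)] at hu ⊢
  refine ⟨τ (s + u), mem_range_self _, ?_, ?_⟩
  · rw [hτ, sub_add_cancel_left, abs_neg, abs_of_nonneg hu.1]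
  · rw [hτ, abs_of_nonpos (by linarith [hu.2])]; ring

namespace FourPointHyp

variable {δ : ℝ}

/-- Triangles are `4δ`-thin. -/
lemma exists_dist_le_of_mem_segment (hyp : FourPointHyp X δ) {S S' : Set X} {a b c p : X}
    (hp : dist a p + dist p b = dist a b) (hS : ContainsSegment S a c)
    (hS' : ContainsSegment S' b c) :
    (∃ m ∈ S, dist a m = dist a p ∧ dist a m + dist m c = dist a c ∧ dist p m ≤ 4 * δ) ∨
      (∃ m ∈ S', dist b m = dist b p ∧ dist b m + dist m c = dist b c ∧ dist p m ≤ 4 * δ) := by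
  have hac : gromovProduct a b c ≤ dist a c := by
    unfold gromovProduct; linarith [dist_triangle a c b, dist_comm c b]
  have hbc : gromovProduct b a c ≤ dist b c := by
    unfold gromovProduct; linarith [dist_triangle b c a, dist_comm c a]
  by_cases hpa : dist a p ≤ gromovProduct a b c
  · obtain ⟨m, hmS, ham, hmc⟩ := hS (dist a p) ⟨dist_nonneg, hpa.trans hac⟩
    exact Or.inl ⟨m, hmS, ham, by linarith,
      hyp.dist_le_of_le_gromovProduct hp (by linarith) ham.symm hpa⟩
  · have hbp : dist b p = dist a b - dist a p := by linarith [dist_comm b p]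
    have hpb : dist b p ≤ gromovProduct b a c := by
      unfold gromovProduct at hpa ⊢; linarith [dist_comm a b]
    obtain ⟨m, hmS, hbm, hmc⟩ := hS' (dist b p) ⟨dist_nonneg, hpb.trans hbc⟩
    exact Or.inr ⟨m, hmS, hbm, by linarith,
      hyp.dist_le_of_le_gromovProduct (by linarith [dist_comm a p, dist_comm a b]) (by linarith)
        hbm.symm hpb⟩

lemma infDist_range_le_of_forall_infDist_le (hyp : FourPointHyp X δ) (hgeo : IsGeodesicSpace X)
    {g h : ℝ → X} (hg : IsGeodLine g) (hh : IsGeodLine h) {C : ℝ}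
    (hC : ∀ t, infDist (g t) (range h) ≤ C) (t : ℝ) : infDist (g t) (range h) ≤ 8 * δ := by
  have hC0 : 0 ≤ C := infDist_nonneg.trans (hC t)
  -- The points `h s`, `h s'` chosen below are closer than `R` to `a`, `b`, so `p` and its
  -- companion `q` can only be close to the sides of the two triangles that run along `h`.
  set R := C + 1
  set a := g (t - R)
  set b := g (t + R)
  set p := g t
  have hap : dist a p = R := by rw [hg, sub_sub_cancel_left, abs_neg, abs_of_pos (by linarith)]
  have hbp : dist b p = R := by rw [hg, add_sub_cancel_left, abs_of_pos (by linarith)]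
  have hab : dist a p + dist p b = dist a b := by
    rw [hap, dist_comm, hbp, hg, abs_of_neg (by linarith)]; ring
  have hne : (range h).Nonempty := range_nonempty h
  obtain ⟨_, ⟨s, rfl⟩, has⟩ := (infDist_lt_iff hne).mp ((hC (t - R)).trans_lt (lt_add_one C))
  obtain ⟨_, ⟨s', rfl⟩, hbs'⟩ := (infDist_lt_iff hne).mp ((hC (t + R)).trans_lt (lt_add_one C))
  rcases hyp.exists_dist_le_of_mem_segment hab (hgeo.containsSegment_univ a (h s'))
      (hgeo.containsSegment_univ b (h s')) with ⟨q, -, haq, hqs', hpq⟩ | ⟨m, -, hbm, hms', -⟩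
  · rcases hyp.exists_dist_le_of_mem_segment hqs' (hgeo.containsSegment_univ a (h s))
        (hh.containsSegment s' s) with ⟨m, -, ham, hms, -⟩ | ⟨m, hm, -, -, hqm⟩
    · linarith [dist_nonneg (x := m) (y := h s)]
    · exact (infDist_le_dist_of_mem hm).trans (by linarith [dist_triangle p q m])
  · linarith [dist_nonneg (x := m) (y := h s')]

lemma add_dist_le_of_infDist (hyp : FourPointHyp X δ) (hδ : 0 < δ) {S : Set X} {y q x : X}
    (hS : ContainsSegment S q x) (hq : dist y q = infDist y S) :
    dist y q + dist q x - 5 * δ ≤ dist y x := by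
  have hmin : ∀ m ∈ S, dist y q ≤ dist y m := fun m hm => hq ▸ infDist_le_dist_of_mem hm
  by_cases hqx : dist q x ≤ 3 * δ
  · linarith [hmin x hS.right_mem]
  · obtain ⟨m, hm, hqm, hmx⟩ := hS (3 * δ) ⟨by linarith, by linarith⟩
    rcases hyp.le_or_le y m q x with h | h <;> linarith [hmin m hm, dist_comm m q]

lemma add_dist_add_le_of_infDist (hyp : FourPointHyp X δ) (hδ : 0 < δ) {S : Set X} {y z q q' : X}
    (hS : ContainsSegment S q q') (hq : dist y q = infDist y S) (hq' : dist z q' = infDist z S)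
    (hfar : 6 * δ < dist q q') :
    dist y q + dist q q' + dist z q' - 12 * δ ≤ dist y z := by
  have hy := hyp.add_dist_le_of_infDist hδ hS hq
  have hz := hyp.add_dist_le_of_infDist hδ hS.symm hq'
  rcases hyp.le_or_le y q' z q with h | h <;> linarith [dist_comm q q', dist_comm q' z]

lemma add_le_dist_apply_apply (hyp : FourPointHyp X δ) (hgeo : IsGeodesicSpace X)
    (ξ : X ≃ᵢ X) {L : ℝ} (hdisp : ∀ x, L ≤ dist x (ξ x)) (hL : 4 * δ < L) (y : X) :
    dist y (ξ y) + L - 4 * δ ≤ dist y (ξ (ξ y)) := by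
  set u := dist y (ξ y)
  obtain ⟨m, -, hym, hmy⟩ := hgeo.containsSegment_univ y (ξ y) (u / 2)
    ⟨by positivity, by linarith [dist_nonneg (x := y) (y := ξ y)]⟩
  have e₁ : dist (ξ y) m = u / 2 := by rw [dist_comm]; linarith
  have e₂ : dist (ξ y) (ξ m) = u / 2 := (ξ.dist_eq _ _).trans hym
  have e₃ : dist (ξ (ξ y)) (ξ m) = u / 2 := (ξ.dist_eq _ _).trans (by linarith)
  have hchain := hyp.min_min_gromovProduct_le (ξ y) m y (ξ (ξ y)) (ξ m)
  unfold gromovProduct at hchain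
  have := sub_le_iff_le_add.mp hchain
  simp only [min_le_iff] at this
  rcases this with h | h | h <;>
    linarith [hdisp m, ξ.dist_eq y (ξ y), dist_comm (ξ y) y, dist_comm m y]

lemma infDist_le_of_isAxis (hyp : FourPointHyp X δ) (hgeo : IsGeodesicSpace X) {ξ : X ≃ᵢ X}
    {τ : ℝ → X} (hax : IsAxis ξ τ) :
    (∀ s ∈ range τ, infDist (ξ s) (range τ) ≤ 8 * δ) ∧
      ∀ s ∈ range τ, infDist s (ξ '' range τ) ≤ 8 * δ := by
  obtain ⟨hτ, C, hC, hC'⟩ := hax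
  have hξτ : IsGeodLine fun s => ξ (τ s) := fun u v => (ξ.dist_eq _ _).trans (hτ u v)
  refine ⟨forall_mem_range.2 (hyp.infDist_range_le_of_forall_infDist_le hgeo hξτ hτ hC), ?_⟩
  rw [← range_comp]
  exact forall_mem_range.2 (hyp.infDist_range_le_of_forall_infDist_le hgeo hτ hξτ hC')

section Displacement

variable {S : Set X} {ξ : X ≃ᵢ X} {y q q' : X}

lemma dist_apply_le_of_infDist (hyp : FourPointHyp X δ) (hδ : 0 < δ)
    (hS : ∀ a ∈ S, ∀ b ∈ S, ContainsSegment S a b) (hξS : ∀ s ∈ S, infDist (ξ s) S ≤ 8 * δ)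
    (hqS : q ∈ S) (hq'S : q' ∈ S) (hq' : dist (ξ y) q' = infDist (ξ y) S)
    (hD : dist y q ≤ dist (ξ y) q' + 8 * δ) :
    dist (ξ q) q' ≤ 31 * δ := by
  obtain ⟨w, hwS, hw⟩ := (infDist_lt_iff ⟨q, hqS⟩).mp
    ((hξS q hqS).trans_lt (by linarith : 8 * δ < 9 * δ))
  have hproj := hyp.add_dist_le_of_infDist hδ (hS q' hq'S w hwS) hq'
  have hyw : dist (ξ y) w ≤ dist y q + dist (ξ q) w := by
    rw [← ξ.dist_eq y q]; exact dist_triangle _ _ _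
  linarith [dist_triangle (ξ q) w q', dist_comm w q']

lemma two_mul_dist_le_of_infDist (hyp : FourPointHyp X δ) (hδ : 0 < δ)
    (hS : ∀ a ∈ S, ∀ b ∈ S, ContainsSegment S a b) (hξS : ∀ s ∈ S, infDist (ξ s) S ≤ 8 * δ)
    (hSξ : ∀ s ∈ S, infDist s (ξ '' S) ≤ 8 * δ) {L : ℝ} (hdisp : ∀ x, L ≤ dist x (ξ x))
    (hL : 37 * δ < L) (hqS : q ∈ S) (hq : dist y q = infDist y S) (hq'S : q' ∈ S)
    (hq' : dist (ξ y) q' = infDist (ξ y) S) :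
    2 * dist y q ≤ dist y (ξ y) - L + 51 * δ := by
  have hD' : dist (ξ y) q' ≤ dist y q + 8 * δ := by
    rw [hq', ← ξ.dist_eq y q]
    linarith [infDist_le_infDist_add_dist (x := ξ y) (y := ξ q) (s := S), hξS q hqS]
  have hD : dist y q ≤ dist (ξ y) q' + 8 * δ := by
    rw [hq, ← infDist_image ξ.isometry]
    linarith [infDist_le_infDist_add_dist (x := ξ y) (y := q') (s := ξ '' S), hSξ q' hq'S,
      dist_comm q' (ξ y)]
  have hqq' : L - 31 * δ ≤ dist q q' := by
    linarith [hdisp q, dist_triangle q q' (ξ q), dist_comm q' (ξ q),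
      hyp.dist_apply_le_of_infDist hδ hS hξS hqS hq'S hq' hD]
  linarith [hyp.add_dist_add_le_of_infDist hδ (hS q hqS q' hq'S) hq hq' (by linarith)]

end Displacement

lemma two_mul_dist_le_of_isAxis (hyp : FourPointHyp X δ) (hδ : 0 < δ)
    (hgeo : IsGeodesicSpace X) {ξ : X ≃ᵢ X} {τ : ℝ → X} (hax : IsAxis ξ τ) {L : ℝ}
    (hdisp : ∀ x, L ≤ dist x (ξ x)) (hL : 37 * δ < L) {y q q' : X}
    (hq : q ∈ range τ ∧ dist y q = infDist y (range τ))
    (hq' : q' ∈ range τ ∧ dist (ξ y) q' = infDist (ξ y) (range τ)) :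
    2 * dist y q ≤ dist y (ξ y) - L + 51 * δ := by
  obtain ⟨hξτ, hτξ⟩ := hyp.infDist_le_of_isAxis hgeo hax
  have hτ : ∀ a ∈ range τ, ∀ b ∈ range τ, ContainsSegment (range τ) a b :=
    forall_mem_range.2 fun s => forall_mem_range.2 (hax.1.containsSegment s)
  exact hyp.two_mul_dist_le_of_infDist hδ hτ hξτ hτξ hdisp hL hq.1 hq.2 hq'.1 hq'.2

end FourPointHyp

lemma IsometryEquiv.zpow_add_one_apply (ξ : X ≃ᵢ X) (k : ℤ) (x : X) :
    (ξ ^ (k + 1)) x = ξ ((ξ ^ k) x) := by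
  rw [add_comm, zpow_one_add, IsometryEquiv.mul_apply]

lemma IsometryEquiv.dist_zpow_apply_apply (ξ : X ≃ᵢ X) (k : ℤ) (x : X) :
    dist ((ξ ^ k) x) (ξ ((ξ ^ k) x)) = dist x (ξ x) := by
  rw [← ξ.zpow_add_one_apply, zpow_add_one, IsometryEquiv.mul_apply, IsometryEquiv.dist_eq]

/- `orbitIndex` is the increasing bijection `ℤ → ℤ ∖ {0}` and `orbitPower` its inverse, so that
`orbitPt ξ O (orbitIndex k) = (ξ ^ k) O`. -/
def orbitIndex (k : ℤ) : ℤ := if 0 ≤ k then k + 1 else k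

def orbitPower (i : ℤ) : ℤ := if 0 < i then i - 1 else i

lemma orbitIndex_ne_zero (k : ℤ) : orbitIndex k ≠ 0 := by
  unfold orbitIndex; split_ifs <;> omega

lemma orbitIndex_orbitPower {i : ℤ} (hi : i ≠ 0) : orbitIndex (orbitPower i) = i := by
  unfold orbitIndex orbitPower; split_ifs <;> omega

lemma orbitPower_lt_orbitPower {i j : ℤ} (hi : i ≠ 0) (hij : i < j) :
    orbitPower i < orbitPower j := by
  unfold orbitPower; split_ifs <;> omega

lemma orbitPt_orbitIndex (ξ : X ≃ᵢ X) (O : X) (k : ℤ) :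
    orbitPt ξ O (orbitIndex k) = (ξ ^ k) O := by
  unfold orbitPt orbitIndex
  split_ifs <;> first | rfl | rw [add_sub_cancel_right] | omega

lemma AdjIdx.exists_eq_orbitIndex {i j : ℤ} (h : AdjIdx i j) :
    ∃ k, i = orbitIndex k ∧ j = orbitIndex (k + 1) := by
  obtain ⟨hi, hj, rfl | ⟨rfl, rfl⟩⟩ := h
  · refine ⟨orbitPower i, ?_, ?_⟩ <;> unfold orbitIndex orbitPower <;> split_ifs <;> omega
  · exact ⟨-1, rfl, rfl⟩

lemma strictMono_of_abs_sub_le {u : ℤ → ℝ} {M : ℝ}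
    (hstep : ∀ k, |u (k + 1) - u k| ≤ M) (hskip : ∀ k, M < |u (k + 2) - u k|)
    (h₀ : u 0 < u 1) : StrictMono u := by
  -- Two consecutive steps of opposite signs (or a zero step) make a double step of size `≤ M`.
  have hsame : ∀ k, (u k < u (k + 1) ↔ u (k + 1) < u (k + 1 + 1)) := by
    intro k
    have h₁ := abs_le.mp (hstep k)
    have h₂ := abs_le.mp (hstep (k + 1))
    have h₃ := lt_abs.mp (hskip k)
    rw [show k + 2 = k + 1 + 1 by ring] at h₃
    constructor <;> intro h <;> by_contra! h' <;> rcases h₃ with h₃ | h₃ <;> linarith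
  refine strictMono_int_of_lt_succ fun k => ?_
  induction k using Int.induction_on with
  | zero => simpa using h₀
  | succ k ih => exact (hsame k).1 ih
  | pred k ih => exact (hsame _).2 (by rwa [sub_add_cancel])

lemma strictMono_or_strictAnti_of_abs_sub_le {u : ℤ → ℝ} {M : ℝ}
    (hstep : ∀ k, |u (k + 1) - u k| ≤ M) (hskip : ∀ k, M < |u (k + 2) - u k|) :
    StrictMono u ∨ StrictAnti u := by
  have hne : u 0 ≠ u 1 := fun h => by
    have h₁ := hstep 1
    have h₂ := hskip 0
    rw [h] at h₂
    norm_num at h₁ h₂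
    linarith
  rcases hne.lt_or_gt with h | h
  · exact Or.inl (strictMono_of_abs_sub_le hstep hskip h)
  · refine Or.inr fun a b hab => neg_lt_neg_iff.mp ?_
    refine strictMono_of_abs_sub_le (u := fun k => -u k) (M := M) (fun k => ?_) (fun k => ?_)
      (neg_lt_neg h) hab
    · rw [neg_sub_neg, abs_sub_comm]; exact hstep k
    · rw [neg_sub_neg, abs_sub_comm]; exact hskip k

lemma IsGeodLine.exists_strictMono_or_strictAnti {τ : ℝ → X} (hτ : IsGeodLine τ) {P : ℤ → X}
    (hP : ∀ k, P k ∈ range τ) {M : ℝ} (hstep : ∀ k, dist (P k) (P (k + 1)) ≤ M)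
    (hskip : ∀ k, M < dist (P k) (P (k + 2))) :
    ∃ u : ℤ → ℝ, (∀ k, τ (u k) = P k) ∧ (StrictMono u ∨ StrictAnti u) := by
  choose u hu using hP
  have hdist : ∀ k l, dist (P k) (P l) = |u l - u k| := fun k l => by
    rw [← hu, ← hu, hτ, abs_sub_comm]
  refine ⟨u, hu, strictMono_or_strictAnti_of_abs_sub_le (M := M) (fun k => ?_) (fun k => ?_)⟩
  · rw [← hdist]; exact hstep k
  · rw [← hdist]; exact hskip k

lemma abs_dist_sub_dist_le (x x' q q' : X) :
    |dist q q' - dist x x'| ≤ dist x q + dist x' q' := by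
  rw [← Real.dist_eq, dist_comm x q, dist_comm x' q']
  exact dist_dist_dist_le q q' x x'

theorem stmt11_general {X : Type*} [MetricSpace X] (δ ε L : ℝ)
    (hδ : 0 < δ) (hεδ : ε < δ)
    (hyp : FourPointHyp X δ) (hgeo : IsGeodesicSpace X)
    (ξ : X ≃ᵢ X) (τ : ℝ → X) (hax : IsAxis ξ τ)
    (hL : L = ⨅ x : X, dist x (ξ x)) (hL300 : 300 * δ ≤ L)
    (O : X) (hO : dist O (ξ O) ≤ L + ε)
    (p : ℤ → X)
    (hp : ∀ i : ℤ, i ≠ 0 → p i ∈ range τ ∧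
      dist (orbitPt ξ O i) (p i) = infDist (orbitPt ξ O i) (range τ)) :
    (∀ i : ℤ, i ≠ 0 → dist (orbitPt ξ O i) (p i) ≤ 28 * δ) ∧
    (∀ i j : ℤ, AdjIdx i j → |L - dist (p i) (p j)| ≤ 56 * δ + ε) ∧
    (∃ t : ℤ → ℝ, (∀ i : ℤ, i ≠ 0 → τ (t i) = p i) ∧
      ((∀ i j : ℤ, i ≠ 0 → j ≠ 0 → i < j → t i < t j) ∨
       (∀ i j : ℤ, i ≠ 0 → j ≠ 0 → i < j → t j < t i))) := by
  have hdisp : ∀ x, L ≤ dist x (ξ x) := fun x =>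
    hL ▸ ciInf_le ⟨0, forall_mem_range.2 fun _ => dist_nonneg⟩ x
  set x : ℤ → X := fun k => (ξ ^ k) O
  have hx : ∀ k, x (k + 1) = ξ (x k) := fun k => ξ.zpow_add_one_apply k O
  have hx₂ : ∀ k, x (k + 2) = ξ (ξ (x k)) := fun k => by
    rw [← hx, ← hx, add_assoc, one_add_one_eq_two]
  have hxx : ∀ k, dist (x k) (ξ (x k)) = dist O (ξ O) := fun k => ξ.dist_zpow_apply_apply k O
  have hP : ∀ k, p (orbitIndex k) ∈ range τ ∧
      dist (x k) (p (orbitIndex k)) = infDist (x k) (range τ) := fun k => by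
    simpa only [orbitPt_orbitIndex] using hp _ (orbitIndex_ne_zero k)
  have hnear : ∀ k, dist (x k) (p (orbitIndex k)) ≤ 28 * δ := fun k => by
    have := hyp.two_mul_dist_le_of_isAxis hδ hgeo hax hdisp (by linarith) (hP k) (hx k ▸ hP (k + 1))
    linarith [hxx k]
  have hpair : ∀ k l, |dist (p (orbitIndex k)) (p (orbitIndex l)) - dist (x k) (x l)| ≤ 56 * δ :=
    fun k l => (abs_dist_sub_dist_le _ _ _ _).trans (by linarith [hnear k, hnear l])
  refine ⟨fun i hi => ?_, fun i j hij => ?_, ?_⟩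
  · rw [← orbitIndex_orbitPower hi, orbitPt_orbitIndex]; exact hnear _
  · obtain ⟨k, rfl, rfl⟩ := hij.exists_eq_orbitIndex
    have := hpair k (k + 1)
    rw [hx, hxx, abs_le] at this
    rw [abs_le]; constructor <;> linarith [hdisp O]
  · obtain ⟨u, hu, hmono⟩ := hax.1.exists_strictMono_or_strictAnti (fun k => (hP k).1)
      (M := L + 57 * δ) (fun k => by
        have := hpair k (k + 1); rw [hx, hxx, abs_le] at this; linarith)
      (fun k => by
        have := hpair k (k + 2)
        rw [hx₂, abs_le] at this
        linarith [hyp.add_le_dist_apply_apply hgeo ξ hdisp (by linarith) (x k), hxx k, hdisp O])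
    refine ⟨fun i => u (orbitPower i), fun i hi => by rw [hu, orbitIndex_orbitPower hi], ?_⟩
    rcases hmono with h | h
    · exact Or.inl fun i j hi _ hij => h (orbitPower_lt_orbitPower hi hij)
    · exact Or.inr fun i j hi _ hij => h (orbitPower_lt_orbitPower hi hij)

/-- For the orbit points `xᵢ` of a hyperbolic isometry `ξ` along its axis `τ`
(minimal displacement `L ≥ 300δ`, `|O ξ(O)| ≤ L + ε`, `0 < ε < δ`), with
nearest-point projections `pᵢ` of `xᵢ` to `τ`: `|xᵢ pᵢ| ≤ 28δ`, for adjacent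
`i, j` one has `|L − |pᵢpⱼ|| ≤ 56δ + ε`, and the `pᵢ` lie on `τ` in the order
induced by `ℤ*`. -/
theorem stmt11 {X : Type*} [MetricSpace X] [ProperSpace X] (δ ε L : ℝ)
    (hδ : 0 < δ) (hε : 0 < ε) (hεδ : ε < δ)
    (hyp : FourPointHyp X δ) (hgeo : IsGeodesicSpace X)
    (ξ : X ≃ᵢ X) (hhyp : IsHypIsom ξ) (τ : ℝ → X) (hax : IsAxis ξ τ)
    (hL : L = ⨅ x : X, dist x (ξ x)) (hL300 : 300 * δ ≤ L)
    (O : X) (hO : dist O (ξ O) ≤ L + ε)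
    (p : ℤ → X)
    (hp : ∀ i : ℤ, i ≠ 0 → p i ∈ range τ ∧
      dist (orbitPt ξ O i) (p i) = infDist (orbitPt ξ O i) (range τ)) :
    (∀ i : ℤ, i ≠ 0 → dist (orbitPt ξ O i) (p i) ≤ 28 * δ) ∧
    (∀ i j : ℤ, AdjIdx i j → |L - dist (p i) (p j)| ≤ 56 * δ + ε) ∧
    (∃ t : ℤ → ℝ, (∀ i : ℤ, i ≠ 0 → τ (t i) = p i) ∧
      ((∀ i j : ℤ, i ≠ 0 → j ≠ 0 → i < j → t i < t j) ∨
       (∀ i j : ℤ, i ≠ 0 → j ≠ 0 → i < j → t j < t i))) :=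
  stmt11_general δ ε L hδ hεδ hyp hgeo ξ τ hax hL hL300 O hO p hp
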